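/- A countable disjoint union (topological sum) of quasi-Polish spaces is quasi-Polish. -/

import Mathlib

open TopologicalSpace Set Topology

/-- A Π⁰₂ set: a countable intersection of sets of the form (complement of open) ∪ open. -/
def IsPi02 {X : Type*} [TopologicalSpace X] (s : Set X) : Prop :=
  ∃ U V : ℕ → Set X, (∀ n, IsOpen (U n)) ∧ (∀ n, IsOpen (V n)) ∧
    s = ⋂ n, ((U n)ᶜ ∪ V n)

/-- A quasi-Polish space: homeomorphic to a Π⁰₂ subspace of 𝕊^ℕ,
where 𝕊 is the Sierpiński space (`Prop` with its topology in Mathlib). -/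
def QuasiPolish (X : Type*) [TopologicalSpace X] : Prop :=
  ∃ s : Set (ℕ → Prop), IsPi02 s ∧ Nonempty (X ≃ₜ s)

/-!
Choose an injection `e : ι → ℕ` and embeddings `f i : X i → 𝕊^ℕ` with Π⁰₂ range, and map
`⟨i, x⟩ ↦ (χ_{e i}, f i x)` into `𝕊^ℕ × 𝕊^ℕ ≃ₜ 𝕊^ℕ`. The open sets `{a | a (e i)}` separate the
indicators `χ_{e i}`, hence the summands, so this is an embedding. Its range is the set of pairs
`(a, y)` with `a` some `χ_{e i}` and `y ∈ range (f i)` whenever `a (e i)`: a countable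
intersection of Π⁰₂ sets, since Π⁰₂ sets are closed under `Oᶜ ∪ ·` for open `O`.
-/

section Pi02

variable {Y : Type*} [TopologicalSpace Y]

lemma isPi02_compl_union {U V : Set Y} (hU : IsOpen U) (hV : IsOpen V) : IsPi02 (Uᶜ ∪ V) :=
  ⟨fun _ => U, fun _ => V, fun _ => hU, fun _ => hV, (iInter_const _).symm⟩

lemma isPi02_iInter_compl_union {κ : Type*} [Countable κ] {U V : κ → Set Y}
    (hU : ∀ k, IsOpen (U k)) (hV : ∀ k, IsOpen (V k)) : IsPi02 (⋂ k, (U k)ᶜ ∪ V k) := by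
  rcases isEmpty_or_nonempty κ with hκ | hκ
  · simpa using isPi02_compl_union (Y := Y) isOpen_empty isOpen_empty
  · obtain ⟨f, hf⟩ := exists_surjective_nat κ
    exact ⟨U ∘ f, V ∘ f, fun n => hU _, fun n => hV _,
      (hf.iInter_comp fun k => (U k)ᶜ ∪ V k).symm⟩

lemma IsPi02.iInter {κ : Type*} [Countable κ] {s : κ → Set Y} (hs : ∀ k, IsPi02 (s k)) :
    IsPi02 (⋂ k, s k) := by
  choose U V hU hV hsUV using hs
  simp_rw [hsUV, ← iInter_sigma (fun q : Σ _ : κ, ℕ => (U q.1 q.2)ᶜ ∪ V q.1 q.2)]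
  exact isPi02_iInter_compl_union (fun q => hU q.1 q.2) fun q => hV q.1 q.2

lemma IsPi02.inter {s t : Set Y} (hs : IsPi02 s) (ht : IsPi02 t) : IsPi02 (s ∩ t) := by
  rw [inter_eq_iInter]
  exact IsPi02.iInter fun b => by cases b <;> assumption

lemma IsOpen.isPi02 {s : Set Y} (hs : IsOpen s) : IsPi02 s := by
  simpa using isPi02_compl_union isOpen_univ hs

lemma IsClosed.isPi02 {s : Set Y} (hs : IsClosed s) : IsPi02 s := by
  simpa using isPi02_compl_union hs.isOpen_compl isOpen_empty

lemma IsPi02.compl_union {O s : Set Y} (hO : IsOpen O) (hs : IsPi02 s) : IsPi02 (Oᶜ ∪ s) := by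
  obtain ⟨U, V, hU, hV, rfl⟩ := hs
  refine ⟨fun n => O ∩ U n, V, fun n => hO.inter (hU n), hV, ?_⟩
  simp_rw [union_iInter, compl_inter, union_assoc]

lemma IsPi02.preimage {Z : Type*} [TopologicalSpace Z] {s : Set Y} (hs : IsPi02 s) {f : Z → Y}
    (hf : Continuous f) : IsPi02 (f ⁻¹' s) := by
  obtain ⟨U, V, hU, hV, rfl⟩ := hs
  refine ⟨fun n => f ⁻¹' U n, fun n => f ⁻¹' V n, fun n => (hU n).preimage hf,
    fun n => (hV n).preimage hf, ?_⟩
  simp only [preimage_iInter, preimage_union, preimage_compl]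

end Pi02

section QuasiPolish

variable {X : Type*} [TopologicalSpace X]

lemma QuasiPolish.exists_isEmbedding (h : QuasiPolish X) :
    ∃ f : X → (ℕ → Prop), IsEmbedding f ∧ IsPi02 (range f) := by
  obtain ⟨s, hs, ⟨φ⟩⟩ := h
  refine ⟨(↑) ∘ φ, IsEmbedding.subtypeVal.comp φ.isEmbedding, ?_⟩
  rwa [range_comp, φ.range_coe, image_univ, Subtype.range_coe]

lemma QuasiPolish.of_isEmbedding {Y : Type*} [TopologicalSpace Y] (ψ : Y ≃ₜ (ℕ → Prop))
    {f : X → Y} (hf : IsEmbedding f) (hs : IsPi02 (range f)) : QuasiPolish X := by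
  refine ⟨range (ψ ∘ f), ?_, ⟨(ψ.isEmbedding.comp hf).toHomeomorph⟩⟩
  rw [range_comp, ψ.image_eq_preimage_symm]
  exact hs.preimage ψ.symm.continuous

end QuasiPolish

lemma isOpen_setOf_apply (n : ℕ) : IsOpen {a : ℕ → Prop | a n} :=
  isOpen_iff_continuous_mem.mpr (continuous_apply n)

lemma isPi02_range_singletonIndicator {ι : Type*} (e : ι → ℕ) :
    IsPi02 (range fun i (n : ℕ) => n = e i) := by
  have hrange : range (fun i (n : ℕ) => n = e i) =
      (⋃ i, {a | a (e i)}) ∩ ⋂ (m) (n) (_ : m ≠ n), {a : ℕ → Prop | a m ∧ a n}ᶜ := by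
    ext a
    simp only [mem_range, mem_inter_iff, mem_iUnion, mem_iInter, mem_ofPred_eq, mem_compl_iff]
    constructor
    · rintro ⟨i, rfl⟩
      exact ⟨⟨i, rfl⟩, fun m n hmn hm => hmn (hm.1.trans hm.2.symm)⟩
    · rintro ⟨⟨i, hi⟩, hunique⟩
      refine ⟨i, funext fun n => propext ⟨fun hn => hn ▸ hi, fun hn => ?_⟩⟩
      by_contra hne
      exact hunique _ _ hne ⟨hn, hi⟩
  rw [hrange]
  refine (isOpen_iUnion fun i => isOpen_setOf_apply (e i)).isPi02.inter (IsClosed.isPi02 ?_)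
  exact isClosed_iInter fun m => isClosed_iInter fun n => isClosed_iInter fun _ =>
    ((isOpen_setOf_apply m).inter (isOpen_setOf_apply n)).isClosed_compl

section SigmaProd

variable {ι : Type*} {X : ι → Type*} {Y Z : Type*}
  [TopologicalSpace Y] [TopologicalSpace Z] {c : ι → Z} {f : ∀ i, X i → Y}

lemma isEmbedding_sigma_prod [∀ i, TopologicalSpace (X i)]
    (hc : ∀ i, ∃ U, IsOpen U ∧ c ⁻¹' U = {i}) (hf : ∀ i, IsEmbedding (f i)) :
    IsEmbedding fun p : Σ i, X i => (c p.1, f p.1 p.2) := by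
  choose U hU hcU using hc
  have hmem : ∀ i j, c j ∈ U i ↔ j = i := fun i j => Set.ext_iff.mp (hcU i) j
  have hc_inj : c.Injective := fun i j hij => ((hmem j i).mp (hij ▸ (hmem j j).mpr rfl))
  refine ⟨inducing_sigma.mpr ⟨fun i => (isInducing_prodMkRight (c i)).comp (hf i).isInducing,
    fun i => ⟨U i ×ˢ univ, (hU i).prod isOpen_univ, fun p => by simp [hmem]⟩⟩, ?_⟩
  rintro ⟨i, x⟩ ⟨j, y⟩ hxy
  obtain ⟨hij, hxy⟩ := Prod.ext_iff.mp hxy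
  obtain rfl : i = j := hc_inj hij
  obtain rfl : x = y := (hf i).injective hxy
  rfl

lemma isPi02_range_sigma_prod [Countable ι] (hc : ∀ i, ∃ U, IsOpen U ∧ c ⁻¹' U = {i})
    (hcr : IsPi02 (range c)) (hf : ∀ i, IsPi02 (range (f i))) :
    IsPi02 (range fun p : Σ i, X i => (c p.1, f p.1 p.2)) := by
  choose U hU hcU using hc
  have hmem : ∀ i j, c j ∈ U i ↔ j = i := fun i j => Set.ext_iff.mp (hcU i) j
  have hrange : range (fun p : Σ i, X i => (c p.1, f p.1 p.2)) =
      Prod.fst ⁻¹' range c ∩ ⋂ i, (Prod.fst ⁻¹' U i)ᶜ ∪ Prod.snd ⁻¹' range (f i) := by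
    ext ⟨z, y⟩
    simp only [mem_range, mem_inter_iff, mem_iInter, mem_union, mem_compl_iff, mem_preimage]
    constructor
    · rintro ⟨⟨i, x⟩, hzy⟩
      obtain ⟨rfl, rfl⟩ := Prod.ext_iff.mp hzy
      refine ⟨⟨i, rfl⟩, fun j => or_iff_not_imp_left.mpr fun hj => ?_⟩
      obtain rfl : i = j := (hmem j i).mp (not_not.mp hj)
      exact ⟨x, rfl⟩
    · rintro ⟨⟨i, rfl⟩, hy⟩
      obtain ⟨x, rfl⟩ := (hy i).resolve_left (not_not.mpr ((hmem i i).mpr rfl))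
      exact ⟨⟨i, x⟩, rfl⟩
  rw [hrange]
  exact (hcr.preimage continuous_fst).inter <| IsPi02.iInter fun i =>
    ((hf i).preimage continuous_snd).compl_union ((hU i).preimage continuous_fst)

end SigmaProd

theorem quasiPolish_sigma {ι : Type*} [Countable ι] (X : ι → Type*)
    [∀ i, TopologicalSpace (X i)] (h : ∀ i, QuasiPolish (X i)) :
    QuasiPolish (Σ i, X i) := by
  obtain ⟨e, he⟩ := Countable.exists_injective_nat ι
  choose f hf hfr using fun i => (h i).exists_isEmbedding
  have hc : ∀ i, ∃ U, IsOpen U ∧ (fun j (n : ℕ) => n = e j) ⁻¹' U = {i} := fun i =>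
    ⟨{a | a (e i)}, isOpen_setOf_apply (e i), by ext j; simp [he.eq_iff, eq_comm]⟩
  exact .of_isEmbedding
    (Homeomorph.sumArrowHomeomorphProdArrow.symm.trans
      (Homeomorph.piCongrLeft (Y := fun _ => Prop) Equiv.natSumNatEquivNat))
    (isEmbedding_sigma_prod hc hf)
    (isPi02_range_sigma_prod hc (isPi02_range_singletonIndicator e) hfr)
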